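/- arXiv:1911.11732 — 4 statements merged into one kernel-verified Lean document; each statement's English description precedes it below -/
import Mathlib

section
/- The flow of the vector field W = −z²x ∂x − z²y ∂y − (x²+y²)z ∂z is complete in forward time and is given explicitly for t ≥ 0 by x_t = x/√(1+tz²κ(tf)), y_t = y/√(1+tz²κ(tf)), z_t = z/√(1+tr²κ(−tf)), where r² = x²+y², f = x²+y²−z², and κ(s) = ∫₀² e^{−su} du = (1−e^{−2s})/s (with κ(0)=2). That is, the curve t ↦ (x_t,y_t,z_t) satisfies the ODE x'_t = −z_t²x_t, y'_t = −z_t²y_t, z'_t = −(x_t²+y_t²)z_t with initial condition (x,y,z). -/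
/-- f(x,y,z) = x² + y² − z². -/
def fCas (p : ℝ × ℝ × ℝ) : ℝ := p.1 ^ 2 + p.2.1 ^ 2 - p.2.2 ^ 2

/-- The vector field W = −z²x ∂x − z²y ∂y − (x²+y²)z ∂z. -/
def Wfield (p : ℝ × ℝ × ℝ) : ℝ × ℝ × ℝ :=
  (-(p.2.2 ^ 2) * p.1, -(p.2.2 ^ 2) * p.2.1, -(p.1 ^ 2 + p.2.1 ^ 2) * p.2.2)

/-- κ(s) = ∫₀² e^{−su} du = (1 − e^{−2s})/s, with κ(0) = 2. -/
noncomputable def kap (s : ℝ) : ℝ := ∫ u in (0:ℝ)..2, Real.exp (-(s * u))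

/-- g_t = (1 + t z² κ(tf))^{−1/2}. -/
noncomputable def gfun (t : ℝ) (p : ℝ × ℝ × ℝ) : ℝ :=
  1 / Real.sqrt (1 + t * p.2.2 ^ 2 * kap (t * fCas p))

/-- ḡ_t = (1 + t r² κ(−tf))^{−1/2}. -/
noncomputable def gbar (t : ℝ) (p : ℝ × ℝ × ℝ) : ℝ :=
  1 / Real.sqrt (1 + t * (p.1 ^ 2 + p.2.1 ^ 2) * kap (-(t * fCas p)))

/-- The explicit forward flow of W: (x g_t, y g_t, z ḡ_t). -/
noncomputable def flowW (p : ℝ × ℝ × ℝ) (t : ℝ) : ℝ × ℝ × ℝ :=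
  (p.1 * gfun t p, p.2.1 * gfun t p, p.2.2 * gbar t p)

/-!
Write `A(t) = 1 + t z² κ(tf)` and `B(t) = 1 + t r² κ(−tf)`, so that `x_t = x / √A`,
`z_t = z / √B`. Substituting `v = tu` gives `t κ(tf) = ∫₀^{2t} e^{−fv} dv`, hence
`A' = 2 z² e^{−2tf}` and `B' = 2 r² e^{2tf}`. Reflecting `u ↦ 2 − u` gives
`e^{−2s} κ(−s) = κ(s)`, which together with `s κ(s) = 1 − e^{−2s}` and `r² = f + z²` yields
`e^{−2tf} B = A`. The logarithmic derivative `A' / 2A = z² e^{−2tf} / A` is therefore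
`z² / B = z_t²`, and symmetrically `B' / 2B = r² / A = x_t² + y_t²`: this is the ODE.
For `t ≥ 0` both `A` and `B` are at least `1` because `κ ≥ 0`.
-/

open Real

lemma kap_nonneg (s : ℝ) : 0 ≤ kap s :=
  intervalIntegral.integral_nonneg (by norm_num) fun _ _ => (exp_pos _).le

lemma mul_kap_mul (t f : ℝ) : t * kap (t * f) = ∫ v in (0:ℝ)..2 * t, exp (-(f * v)) := by
  have h := intervalIntegral.mul_integral_comp_mul_left (a := 0) (b := 2)
    (f := fun v => exp (-(f * v))) t
  rw [mul_zero, mul_comm t 2] at h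
  rw [kap, ← h]
  simp only [mul_left_comm f t, mul_assoc]

lemma mul_kap (s : ℝ) : s * kap s = 1 - exp (-(2 * s)) := by
  simpa [intervalIntegral.integral_comp_neg, integral_exp] using mul_kap_mul s 1

lemma exp_mul_kap_neg (s : ℝ) : exp (-(2 * s)) * kap (-s) = kap s := by
  have h := intervalIntegral.integral_comp_sub_left (a := 0) (b := 2) (fun u => exp (-(s * u))) 2
  rw [sub_self, sub_zero] at h
  rw [kap, kap, ← intervalIntegral.integral_const_mul, ← h]
  congr 1 with u
  rw [← exp_add]
  ring_nf

lemma hasDerivAt_mul_kap_mul (f t : ℝ) :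
    HasDerivAt (fun t => t * kap (t * f)) (2 * exp (-(2 * (t * f)))) t := by
  have hc : Continuous fun v => exp (-(f * v)) := by fun_prop
  have h := (hc.integral_hasStrictDerivAt 0 (2 * t)).hasDerivAt.comp t
    ((hasDerivAt_id t).const_mul 2)
  rw [funext fun t => mul_kap_mul t f]
  exact h.congr_deriv (by ring_nf)

noncomputable def flowDenom (c f t : ℝ) : ℝ := 1 + t * c * kap (t * f)

lemma flowDenom_pos (f : ℝ) {c t : ℝ} (hc : 0 ≤ c) (ht : 0 ≤ t) : 0 < flowDenom c f t := by
  have := kap_nonneg (t * f)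
  unfold flowDenom
  positivity

lemma hasDerivAt_flowDenom (c f t : ℝ) :
    HasDerivAt (flowDenom c f) (2 * c * exp (-(2 * (t * f)))) t := by
  have h := ((hasDerivAt_mul_kap_mul f t).const_mul c).const_add 1
  unfold flowDenom
  exact (h.congr_deriv (by ring)).congr_of_eventuallyEq (.of_forall fun s => by ring)

lemma exp_mul_flowDenom_neg (c f t : ℝ) :
    exp (-(2 * (t * f))) * flowDenom (f + c) (-f) t = flowDenom c f t := by
  have h₁ := mul_kap (t * f)
  have h₂ := exp_mul_kap_neg (t * f)
  unfold flowDenom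
  rw [mul_neg]
  linear_combination h₁ + t * (f + c) * h₂

lemma flowW_eq (p : ℝ × ℝ × ℝ) :
    flowW p = fun t =>
      (p.1 * (1 / √(flowDenom (p.2.2 ^ 2) (fCas p) t)),
        p.2.1 * (1 / √(flowDenom (p.2.2 ^ 2) (fCas p) t)),
        p.2.2 * (1 / √(flowDenom (p.1 ^ 2 + p.2.1 ^ 2) (-fCas p) t))) := by
  funext t
  simp only [flowW, gfun, gbar, flowDenom, mul_neg]

lemma HasDerivAt.one_div_sqrt {A : ℝ → ℝ} {A' t : ℝ} (hA : HasDerivAt A A' t) (hpos : 0 < A t) :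
    HasDerivAt (fun s => 1 / √(A s)) (-(A' / (2 * A t)) * (1 / √(A t))) t := by
  have hs : 0 < √(A t) := sqrt_pos.2 hpos
  simp only [one_div]
  refine ((hA.sqrt hpos.ne').inv hs.ne').congr_deriv ?_
  field_simp
  rw [sq_sqrt hpos.le]

lemma two_mul_mul_div_two_mul_eq {a b e : ℝ} (c : ℝ) (ha : 0 < a) (hb : 0 < b) (h : e * b = a) :
    2 * c * e / (2 * a) = c * (1 / √b) ^ 2 := by
  rw [one_div, inv_pow, sq_sqrt hb.le, ← h]
  field_simp [(pos_of_mul_pos_left (h ▸ ha) hb.le).ne']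

/-- The explicit formula (x g_t, y g_t, z ḡ_t) solves the ODE of W for all t ≥ 0,
with initial condition (x,y,z); in particular the forward flow is complete. -/
theorem flowW_solves_ODE (p : ℝ × ℝ × ℝ) :
    flowW p 0 = p ∧
    ∀ t : ℝ, 0 ≤ t → HasDerivAt (flowW p) (Wfield (flowW p t)) t := by
  obtain ⟨x, y, z⟩ := p
  refine ⟨by simp [flowW, gfun, gbar], fun t ht => ?_⟩
  set f := fCas (x, y, z)
  have hA := flowDenom_pos f (sq_nonneg z) ht
  have hB := flowDenom_pos (-f) (by positivity : 0 ≤ x ^ 2 + y ^ 2) ht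
  have hBA : exp (-(2 * (t * f))) * flowDenom (x ^ 2 + y ^ 2) (-f) t = flowDenom (z ^ 2) f t := by
    have hr : f + z ^ 2 = x ^ 2 + y ^ 2 := by simp only [f, fCas]; ring
    rw [← hr]
    exact exp_mul_flowDenom_neg _ _ _
  have hAB : exp (-(2 * (t * -f))) * flowDenom (z ^ 2) f t = flowDenom (x ^ 2 + y ^ 2) (-f) t := by
    rw [← hBA, ← mul_assoc, ← exp_add, mul_neg, mul_neg, neg_neg, add_neg_cancel, exp_zero, one_mul]
  have hgA := (hasDerivAt_flowDenom (z ^ 2) f t).one_div_sqrt hA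
  have hgB := (hasDerivAt_flowDenom (x ^ 2 + y ^ 2) (-f) t).one_div_sqrt hB
  rw [flowW_eq]
  refine ((hgA.const_mul x).prodMk ((hgA.const_mul y).prodMk (hgB.const_mul z))).congr_deriv ?_
  rw [two_mul_mul_div_two_mul_eq _ hA hB hBA, two_mul_mul_div_two_mul_eq _ hB hA hAB]
  simp only [Wfield]
  ext <;> ring
end

section
/- For all ε ∈ [0,1] and all s, v ≥ 0, the inequality ε·e^{−2εs}/(1+vκ(s)) ≤ 1/(1+2(v+s)) holds, where κ(s) = (1−e^{−2s})/s (with κ(0)=2). -/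
open Real

-- On `[0, a]` the integrand of `kap s` is at least `exp (-(s * a))`.
lemma mul_exp_neg_mul_le_kap {s a : ℝ} (hs : 0 ≤ s) (ha0 : 0 ≤ a) (ha2 : a ≤ 2) :
    a * exp (-(s * a)) ≤ kap s := by
  have hcont : Continuous fun u : ℝ => exp (-(s * u)) := by fun_prop
  calc a * exp (-(s * a))
      = ∫ _ in (0:ℝ)..a, exp (-(s * a)) := by simp
    _ ≤ ∫ u in (0:ℝ)..a, exp (-(s * u)) :=
        intervalIntegral.integral_mono_on ha0 intervalIntegrable_const
          (hcont.intervalIntegrable _ _) fun u hu =>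
            exp_le_exp.2 (neg_le_neg (mul_le_mul_of_nonneg_left hu.2 hs))
    _ ≤ kap s :=
        intervalIntegral.integral_mono_interval le_rfl ha0 ha2
          (Filter.Eventually.of_forall fun u => (exp_pos _).le) (hcont.intervalIntegrable _ _)

lemma mul_one_add_two_mul_mul_exp_le_one {ε : ℝ} (s : ℝ) (hε1 : ε ≤ 1) :
    ε * (1 + 2 * s) * exp (-(2 * ε * s)) ≤ 1 := by
  rw [exp_neg, ← div_eq_mul_inv, div_le_one (exp_pos _)]
  linarith [add_one_le_exp (2 * ε * s)]

/-- For all ε ∈ [0,1] and s, v ≥ 0: ε e^{−2εs}/(1 + v κ(s)) ≤ 1/(1 + 2(v+s)). -/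
theorem kappa_inequality (ε : ℝ) (hε0 : 0 ≤ ε) (hε1 : ε ≤ 1)
    (s v : ℝ) (hs : 0 ≤ s) (hv : 0 ≤ v) :
    ε * Real.exp (-(2 * ε * s)) / (1 + v * kap s) ≤ 1 / (1 + 2 * (v + s)) := by
  have hkap : 2 * ε * exp (-(2 * ε * s)) ≤ kap s := by
    simpa only [mul_comm s] using mul_exp_neg_mul_le_kap hs (by positivity) (by linarith)
  have hkap0 : 0 ≤ kap s := le_trans (by positivity) hkap
  rw [div_le_div_iff₀ (by positivity) (by positivity)]
  calc ε * exp (-(2 * ε * s)) * (1 + 2 * (v + s))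
      = ε * (1 + 2 * s) * exp (-(2 * ε * s)) + v * (2 * ε * exp (-(2 * ε * s))) := by ring
    _ ≤ 1 + v * kap s :=
        add_le_add (mul_one_add_two_mul_mul_exp_le_one s hε1) (mul_le_mul_of_nonneg_left hkap hv)
    _ = 1 * (1 + v * kap s) := by ring
end

section
/- For all p > 0 and q > 0 there is a constant C = C(p,q) > 0 such that for all t > 0 and all (x,y,z) ∈ ℝ³ \ {0}: g_t^p · ḡ_t^q ≤ C · R^{−(p+q)} · t^{−(p+q)/2}, where g_t = (1+tz²κ(tf))^{−1/2}, ḡ_t = (1+tr²κ(−tf))^{−1/2}, r²=x²+y², f=r²−z², R²=x²+y²+z², and κ(s)=(1−e^{−2s})/s (κ(0)=2). -/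
/-!
Write `a = t z²`, `b = t r²` and `S = t f = b − a`, and put `A = 1 + a κ(S)`. From
`s κ(s) = 1 − e^{−2s}` and `κ(−s) = e^{2s} κ(s)` one gets `1 + b κ(−S) = e^{2S} A`, so that,
with `ε = q/(p+q)`, `g_t^p ḡ_t^q = (A e^{2εS})^{−(p+q)/2}`. The factor `A e^{2εS}` is
invariant under `(a, b, ε) ↦ (b, a, 1 − ε)`, so one may assume `S ≥ 0`. Then the elementary
bounds `2ε ≤ κ(s) e^{2εs}` and `ε (1 + 2s) ≤ e^{2εs}` give `ε (1 + 2b) ≤ A e^{2εS}`, while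
`t R² = a + b ≤ 1 + 2b`. Hence `t R² ≤ max(1/ε, 1/(1−ε)) · A e^{2εS}`, which is the claim
with `C = max((p+q)/q, (p+q)/p)^{(p+q)/2}`.
-/

open Real

lemma kap_zero : kap 0 = 2 := by simp [kap]

lemma kap_neg (s : ℝ) : kap (-s) = exp (2 * s) * kap s := by
  rw [kap, kap, ← intervalIntegral.integral_const_mul]
  have h := intervalIntegral.integral_comp_sub_left (fun u => exp (s * u)) (a := 0) (b := 2) 2
  simp only [sub_self, sub_zero] at h
  simp_rw [neg_mul, neg_neg, ← h, ← exp_add]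
  congr 1; ext u; ring_nf

lemma one_add_mul_kap_neg (a s : ℝ) :
    1 + (a + s) * kap (-s) = exp (2 * s) * (1 + a * kap s) := by
  have h : exp (2 * s) * exp (-(2 * s)) = 1 := by rw [← exp_add]; simp
  linear_combination exp (2 * s) * mul_kap s - h + (a + s) * kap_neg s

lemma two_mul_le_kap_mul_exp {s ε : ℝ} (hs : 0 ≤ s) (hε : ε ≤ 1) :
    2 * ε ≤ kap s * exp (2 * ε * s) := by
  rcases hs.eq_or_lt with rfl | hs
  · simp [kap_zero, hε]
  refine le_of_mul_le_mul_left ?_ hs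
  have hmono : exp (-(2 * s)) ≤ exp (-(2 * ε * s)) := exp_le_exp.mpr (by nlinarith)
  have hinv : exp (-(2 * ε * s)) * exp (2 * ε * s) = 1 := by rw [← exp_add]; simp
  calc s * (2 * ε) ≤ exp (2 * ε * s) - 1 := by linarith [add_one_le_exp (2 * ε * s)]
    _ = (1 - exp (-(2 * ε * s))) * exp (2 * ε * s) := by linear_combination hinv
    _ ≤ (1 - exp (-(2 * s))) * exp (2 * ε * s) := by gcongr
    _ = s * (kap s * exp (2 * ε * s)) := by rw [← mul_assoc, mul_kap]

lemma mul_one_add_le_one_add_mul_kap_mul_exp {v s ε : ℝ} (hv : 0 ≤ v) (hs : 0 ≤ s)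
    (hε : ε ≤ 1) : ε * (1 + 2 * (v + s)) ≤ (1 + v * kap s) * exp (2 * ε * s) := by
  have h1 : ε * (1 + 2 * s) ≤ exp (2 * ε * s) := by linarith [add_one_le_exp (2 * ε * s)]
  have h2 := mul_le_mul_of_nonneg_left (two_mul_le_kap_mul_exp hs hε) hv
  linarith

noncomputable def mixedFactor (a b ε : ℝ) : ℝ := (1 + a * kap (b - a)) * exp (2 * ε * (b - a))

lemma mixedFactor_swap (a b ε : ℝ) : mixedFactor b a (1 - ε) = mixedFactor a b ε := by
  have h := one_add_mul_kap_neg a (b - a)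
  rw [add_sub_cancel, neg_sub] at h
  rw [mixedFactor, mixedFactor, h, mul_comm (exp _), mul_assoc, ← exp_add]
  ring_nf

lemma add_le_max_inv_mul_mixedFactor {a b ε : ℝ} (ha : 0 ≤ a) (hb : 0 ≤ b) (hε₀ : 0 < ε)
    (hε₁ : ε < 1) : a + b ≤ max ε⁻¹ (1 - ε)⁻¹ * mixedFactor a b ε := by
  wlog hab : a ≤ b generalizing a b ε
  · have h := this hb ha (sub_pos.mpr hε₁) (sub_lt_self 1 hε₀) (le_of_not_ge hab)
    rwa [mixedFactor_swap, sub_sub_cancel, max_comm, add_comm] at h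
  have hcore : ε * (1 + 2 * (a + (b - a))) ≤ mixedFactor a b ε :=
    mul_one_add_le_one_add_mul_kap_mul_exp ha (sub_nonneg.mpr hab) hε₁.le
  have hM : 0 ≤ mixedFactor a b ε := le_trans (by positivity) hcore
  calc a + b ≤ ε⁻¹ * (ε * (1 + 2 * (a + (b - a)))) := by
        rw [inv_mul_cancel_left₀ hε₀.ne']; linarith
    _ ≤ ε⁻¹ * mixedFactor a b ε := by gcongr
    _ ≤ max ε⁻¹ (1 - ε)⁻¹ * mixedFactor a b ε := by gcongr; exact le_max_left _ _

lemma one_div_sqrt_rpow {x : ℝ} (hx : 0 ≤ x) (p : ℝ) : (1 / √x) ^ p = x ^ (-(p / 2)) := by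
  rw [sqrt_eq_rpow, one_div, ← rpow_neg hx, ← rpow_mul hx]
  ring_nf

lemma gfun_rpow_mul_gbar_rpow {t : ℝ} (ht : 0 ≤ t) (v : ℝ × ℝ × ℝ) {p q : ℝ}
    (hpq : p + q ≠ 0) :
    gfun t v ^ p * gbar t v ^ q =
      mixedFactor (t * v.2.2 ^ 2) (t * (v.1 ^ 2 + v.2.1 ^ 2)) (q / (p + q)) ^ (-((p + q) / 2)) := by
  set a := t * v.2.2 ^ 2
  set s := t * (v.1 ^ 2 + v.2.1 ^ 2) - a
  have hS : t * fCas v = s := by simp only [fCas, s, a]; ring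
  have hA : 0 < 1 + a * kap s := by have := kap_nonneg s; positivity
  have hg : gfun t v = 1 / √(1 + a * kap s) := by rw [gfun, hS]
  have hgbar : gbar t v = 1 / √(exp (2 * s) * (1 + a * kap s)) := by
    rw [gbar, hS, ← one_add_mul_kap_neg, add_sub_cancel]
  rw [hg, hgbar, one_div_sqrt_rpow hA.le, one_div_sqrt_rpow (by positivity), mixedFactor,
    mul_rpow (exp_pos _).le hA.le, mul_rpow hA.le (exp_pos _).le, ← exp_mul, ← exp_mul]
  calc (1 + a * kap s) ^ (-(p / 2)) * (exp (2 * s * -(q / 2)) * (1 + a * kap s) ^ (-(q / 2)))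
      = (1 + a * kap s) ^ (-(p / 2) + -(q / 2)) * exp (2 * s * -(q / 2)) := by
        rw [rpow_add hA]; ring
    _ = _ := by congr 2 <;> field_simp <;> ring

lemma div_rpow_neg_half {x t c : ℝ} (hx : 0 ≤ x) (ht : 0 ≤ t) (hc : 0 ≤ c) (m : ℝ) :
    (t * x / c) ^ (-(m / 2)) = c ^ (m / 2) * √x ^ (-m) * t ^ (-(m / 2)) := by
  rw [div_rpow (mul_nonneg ht hx) hc, mul_rpow ht hx, rpow_neg hc, sqrt_eq_rpow, ← rpow_mul hx]
  field_simp

lemma sum_sq_pos_of_ne_zero {v : ℝ × ℝ × ℝ} (hv : v ≠ 0) :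
    0 < v.1 ^ 2 + v.2.1 ^ 2 + v.2.2 ^ 2 := by
  obtain ⟨x, y, z⟩ := v
  contrapose! hv
  simp only [Prod.mk_eq_zero]
  refine ⟨?_, ?_, ?_⟩ <;>
    exact pow_eq_zero_iff two_ne_zero |>.mp (by nlinarith [sq_nonneg x, sq_nonneg y, sq_nonneg z])

/-- For p, q > 0 there is C > 0 with g_t^p ḡ_t^q ≤ C R^{−(p+q)} t^{−(p+q)/2}
for all t > 0 and all nonzero (x,y,z). -/
theorem gfun_gbar_decay (p q : ℝ) (hp : 0 < p) (hq : 0 < q) :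
    ∃ C > (0:ℝ), ∀ t > (0:ℝ), ∀ v : ℝ × ℝ × ℝ, v ≠ 0 →
      gfun t v ^ p * gbar t v ^ q ≤
        C * Real.sqrt (v.1 ^ 2 + v.2.1 ^ 2 + v.2.2 ^ 2) ^ (-(p + q))
          * t ^ (-((p + q) / 2)) := by
  have hpq : 0 < p + q := add_pos hp hq
  set ε := q / (p + q)
  have hε₀ : 0 < ε := div_pos hq hpq
  have hε₁ : ε < 1 := (div_lt_one hpq).mpr (lt_add_of_pos_left q hp)
  set C₀ := max ε⁻¹ (1 - ε)⁻¹
  have hC₀ : 0 < C₀ := lt_max_of_lt_left (inv_pos.mpr hε₀)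
  refine ⟨C₀ ^ ((p + q) / 2), rpow_pos_of_pos hC₀ _, fun t ht v hv => ?_⟩
  have hR := sum_sq_pos_of_ne_zero hv
  have hbound := add_le_max_inv_mul_mixedFactor (a := t * v.2.2 ^ 2)
    (b := t * (v.1 ^ 2 + v.2.1 ^ 2)) (by positivity) (by positivity) hε₀ hε₁
  rw [gfun_rpow_mul_gbar_rpow ht.le v hpq.ne', ← div_rpow_neg_half hR.le ht.le hC₀.le]
  refine rpow_le_rpow_of_nonpos (by positivity) ?_ (by linarith)
  rw [div_le_iff₀' hC₀]
  linarith
end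

section
/- For every point (x,y,z) ∈ ℝ³, the forward flow (x_t,y_t,z_t) of W = −z²x ∂x − z²y ∂y − (x²+y²)z ∂z converges pointwise as t → ∞ to p_X(x,y,z), where with f = x²+y²−z², r = √(x²+y²): p_X(x,y,z) = ((x/r)√f, (y/r)√f, 0) if f > 0; p_X = (0,0,0) if f = 0; and p_X(x,y,z) = (0,0, sign(z)√(−f)) if f < 0. -/
/-- The retraction p_X to the "cohomological skeleton" X = {x=y=0} ∪ {z=0}. -/
noncomputable def pX (p : ℝ × ℝ × ℝ) : ℝ × ℝ × ℝ :=
  if 0 < fCas p then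
    (p.1 / Real.sqrt (p.1 ^ 2 + p.2.1 ^ 2) * Real.sqrt (fCas p),
     p.2.1 / Real.sqrt (p.1 ^ 2 + p.2.1 ^ 2) * Real.sqrt (fCas p), 0)
  else if fCas p < 0 then
    (0, 0, Real.sign p.2.2 * Real.sqrt (-(fCas p)))
  else 0

/-!
Since `κ(s) = (1 - e^{-2s})/s`, for `f > 0` one has `t κ(t f) → 1/f`, whereas `κ(s) ≥ 2` for
`s ≤ 0` makes `t κ(t f)` grow at least like `2t`. Hence for `f > 0` the factor `g_t` tends
to `√(f / (f + z²)) = √f / r` and `ḡ_t` to `0`; for `f < 0` the roles are swapped and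
`ḡ_t → √(-f) / |z|`; for `f = 0` both factors tend to `0` away from the origin.
-/
open Filter Topology Real

lemma kap_of_ne_zero {s : ℝ} (hs : s ≠ 0) : kap s = (1 - exp (-(2 * s))) / s := by
  have h := intervalIntegral.integral_comp_mul_left (a := 0) (b := 2) exp (neg_ne_zero.2 hs)
  simp only [neg_mul] at h
  rw [kap, h, integral_exp, mul_zero, neg_zero, exp_zero, mul_comm 2 s, smul_eq_mul]
  field_simp
  ring

lemma two_le_kap_of_nonpos {s : ℝ} (hs : s ≤ 0) : 2 ≤ kap s := by
  have hle : ∀ u ∈ Set.Icc (0 : ℝ) 2, (1 : ℝ) ≤ exp (-(s * u)) := fun u hu =>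
    one_le_exp (by nlinarith [hu.1])
  have hcont : Continuous fun u => exp (-(s * u)) := by fun_prop
  have := intervalIntegral.integral_mono_on (by norm_num) intervalIntegrable_const
    (hcont.intervalIntegrable (μ := MeasureTheory.volume) _ _) hle
  simpa [kap] using this

noncomputable def flowFactor (c f t : ℝ) : ℝ := 1 / √(1 + t * c * kap (t * f))

lemma gbar_eq_flowFactor (t : ℝ) (p : ℝ × ℝ × ℝ) :
    gbar t p = flowFactor (p.1 ^ 2 + p.2.1 ^ 2) (-fCas p) t := by
  rw [gbar, flowFactor, mul_neg]

lemma tendsto_flowFactor_of_pos {c f : ℝ} (hc : 0 ≤ c) (hf : 0 < f) :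
    Tendsto (flowFactor c f) atTop (𝓝 (√f / √(f + c))) := by
  have hexp : Tendsto (fun t => exp (-(2 * (t * f)))) atTop (𝓝 0) :=
    tendsto_exp_atBot.comp <| tendsto_neg_atTop_atBot.comp <|
      (tendsto_id.atTop_mul_const hf).const_mul_atTop two_pos
  have hA : Tendsto (fun t => t * c * kap (t * f)) atTop (𝓝 (c / f)) := by
    have := ((hexp.const_sub 1).const_mul c).div_const f
    rw [sub_zero, mul_one] at this
    refine this.congr' ?_
    filter_upwards [eventually_gt_atTop 0] with t ht
    rw [kap_of_ne_zero (mul_pos ht hf).ne']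
    field_simp
  have hlim : 1 / √(1 + c / f) = √f / √(f + c) := by
    rw [one_add_div hf.ne', sqrt_div' _ hf.le, one_div_div, add_comm]
  rw [← hlim]
  have hpos : √(1 + c / f) ≠ 0 := by positivity
  exact tendsto_const_nhds.div ((continuous_sqrt.tendsto _).comp (hA.const_add 1)) hpos

lemma tendsto_flowFactor_of_nonpos {c f : ℝ} (hc : 0 < c) (hf : f ≤ 0) :
    Tendsto (flowFactor c f) atTop (𝓝 0) := by
  have hA : Tendsto (fun t => 1 + t * c * kap (t * f)) atTop atTop := by
    refine tendsto_atTop_add_const_left _ 1 <|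
      tendsto_atTop_mono' _ ?_ (tendsto_id.atTop_mul_const (by positivity : 0 < c * 2))
    filter_upwards [eventually_ge_atTop 0] with t ht
    have := two_le_kap_of_nonpos (mul_nonpos_of_nonneg_of_nonpos ht hf)
    dsimp only [id]
    nlinarith [mul_nonneg ht hc.le]
  have := (tendsto_sqrt_atTop.comp hA).inv_tendsto_atTop
  exact this.congr fun t => (one_div _).symm

lemma Real.self_div_abs_eq_sign {z : ℝ} (hz : z ≠ 0) : z / |z| = sign z := by
  rcases hz.lt_or_gt with hz | hz
  · rw [abs_of_neg hz, sign_of_neg hz, div_neg, div_self hz.ne]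
  · rw [abs_of_pos hz, sign_of_pos hz, div_self hz.ne']

lemma tendsto_flowW {p : ℝ × ℝ × ℝ} {a b : ℝ}
    (hg : Tendsto (flowFactor (p.2.2 ^ 2) (fCas p)) atTop (𝓝 a))
    (hgbar : Tendsto (flowFactor (p.1 ^ 2 + p.2.1 ^ 2) (-fCas p)) atTop (𝓝 b)) :
    Tendsto (flowW p) atTop (𝓝 (p.1 * a, p.2.1 * a, p.2.2 * b)) := by
  have hgbar' : Tendsto (gbar · p) atTop (𝓝 b) :=
    hgbar.congr fun t => (gbar_eq_flowFactor t p).symm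
  exact (hg.const_mul _).prodMk_nhds ((hg.const_mul _).prodMk_nhds (hgbar'.const_mul _))

lemma tendsto_flowW_of_fCas_pos {p : ℝ × ℝ × ℝ} (hf : 0 < fCas p) :
    Tendsto (flowW p) atTop (𝓝 (p.1 / √(p.1 ^ 2 + p.2.1 ^ 2) * √(fCas p),
      p.2.1 / √(p.1 ^ 2 + p.2.1 ^ 2) * √(fCas p), 0)) := by
  have hr : fCas p + p.2.2 ^ 2 = p.1 ^ 2 + p.2.1 ^ 2 := by rw [fCas]; ring
  have hg := tendsto_flowFactor_of_pos (sq_nonneg p.2.2) hf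
  rw [hr] at hg
  have hgbar := tendsto_flowFactor_of_nonpos (hr ▸ add_pos_of_pos_of_nonneg hf (sq_nonneg _))
    (neg_nonpos.2 hf.le)
  have hlim : (p.1 / √(p.1 ^ 2 + p.2.1 ^ 2) * √(fCas p),
      p.2.1 / √(p.1 ^ 2 + p.2.1 ^ 2) * √(fCas p), (0 : ℝ)) =
      (p.1 * (√(fCas p) / √(p.1 ^ 2 + p.2.1 ^ 2)),
        p.2.1 * (√(fCas p) / √(p.1 ^ 2 + p.2.1 ^ 2)), p.2.2 * 0) := by
    simp only [mul_zero, div_mul_eq_mul_div, mul_div_assoc]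
  rw [hlim]
  exact tendsto_flowW hg hgbar

lemma tendsto_flowW_of_fCas_neg {p : ℝ × ℝ × ℝ} (hf : fCas p < 0) :
    Tendsto (flowW p) atTop (𝓝 (0, 0, Real.sign p.2.2 * √(-fCas p))) := by
  have hr : -fCas p + (p.1 ^ 2 + p.2.1 ^ 2) = p.2.2 ^ 2 := by rw [fCas]; ring
  have hz2 : 0 < p.2.2 ^ 2 := hr ▸ add_pos_of_pos_of_nonneg (neg_pos.2 hf) (by positivity)
  have hg := tendsto_flowFactor_of_nonpos hz2 hf.le
  have hgbar := tendsto_flowFactor_of_pos (add_nonneg (sq_nonneg p.1) (sq_nonneg p.2.1))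
    (neg_pos.2 hf)
  rw [hr, sqrt_sq_eq_abs] at hgbar
  have hlim : ((0 : ℝ), (0 : ℝ), Real.sign p.2.2 * √(-fCas p)) =
      (p.1 * 0, p.2.1 * 0, p.2.2 * (√(-fCas p) / |p.2.2|)) := by
    rw [← Real.self_div_abs_eq_sign (sq_pos_iff.mp hz2), mul_zero, mul_zero, mul_comm_div]
  rw [hlim]
  exact tendsto_flowW hg hgbar

lemma tendsto_flowW_of_fCas_eq_zero {p : ℝ × ℝ × ℝ} (hf : fCas p = 0) :
    Tendsto (flowW p) atTop (𝓝 0) := by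
  obtain ⟨x, y, z⟩ := p
  rw [fCas] at hf
  rcases eq_or_ne z 0 with rfl | hz
  · obtain ⟨rfl, rfl⟩ : x = 0 ∧ y = 0 := by
      constructor <;> nlinarith [sq_nonneg x, sq_nonneg y]
    refine tendsto_const_nhds.congr fun t => ?_
    simp only [flowW, zero_mul, Prod.mk_zero_zero]
  · have hr : 0 < x ^ 2 + y ^ 2 := by nlinarith [sq_pos_of_ne_zero hz]
    have hg := tendsto_flowFactor_of_nonpos (sq_pos_of_ne_zero hz) hf.le
    have hgbar := tendsto_flowFactor_of_nonpos hr (neg_nonpos.2 hf.ge)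
    simpa only [mul_zero, Prod.mk_zero_zero] using
      tendsto_flowW (p := (x, y, z)) hg hgbar

/-- The forward flow of W converges pointwise, as t → ∞, to the retraction p_X. -/
theorem flowW_tendsto_pX (p : ℝ × ℝ × ℝ) :
    Filter.Tendsto (fun t => flowW p t) Filter.atTop (nhds (pX p)) := by
  rcases lt_trichotomy (fCas p) 0 with hf | hf | hf
  · rw [pX, if_neg hf.not_gt, if_pos hf]
    exact tendsto_flowW_of_fCas_neg hf
  · rw [pX, if_neg hf.not_gt, if_neg hf.not_lt]
    exact tendsto_flowW_of_fCas_eq_zero hf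
  · rw [pX, if_pos hf]
    exact tendsto_flowW_of_fCas_pos hf
end
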